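/- Universality of the rational-exponent space: let q : ℕ → ℚ ∩ [1,∞) be a bijective enumeration of the rationals in [1,∞). Then for every p : ℕ → [1,∞] and every ε > 0 there is a strictly increasing sequence (n_k) of positive integers such that the placement map φ — sending y to the sequence with y₁ at coordinate n₁, y_{k+1} at coordinate n_k + 1 for k ≥ 1, and zero elsewhere — satisfies (1+ε)^{-1}·Φ_p(y) ≤ Φ_q(φ(y)) ≤ (1+ε)·Φ_p(y) for every bounded sequence y. Hence ℓ^{q(·)} contains every space ℓ^{p(·)} almost isometrically. -/

import Mathlib

open scoped ENNReal

/-- `t ⊞_p s`: for `p < ∞`, `(t^p + s^p)^(1/p)`; for `p = ∞`, `max t s`. -/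
noncomputable def boxPlus (p : ℝ≥0∞) (t s : ℝ) : ℝ :=
  if p = ∞ then max t s else (t ^ p.toReal + s ^ p.toReal) ^ (1 / p.toReal)

/-- The recursively defined seminorms `|||x|||_(k)` (0-indexed). -/
noncomputable def seqNorm (p : ℕ → ℝ≥0∞) (x : ℕ → ℝ) : ℕ → ℝ
  | 0 => boxPlus (p 0) |x 0| |x 1|
  | k + 1 => boxPlus (p (k + 1)) (seqNorm p x k) |x (k + 2)|

/-- `Φ_p(x) = lim_k |||x|||_(k)`, as the supremum of the nondecreasing sequence. -/
noncomputable def Phi (p : ℕ → ℝ≥0∞) (x : ℕ → ℝ) : ℝ≥0∞ :=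
  ⨆ k, ENNReal.ofReal (seqNorm p x k)

/-- `x` is a bounded real sequence, i.e. `x ∈ ℓ^∞`. -/
def IsBddSeq (x : ℕ → ℝ) : Prop := ∃ M : ℝ, ∀ n, |x n| ≤ M

/-- Membership in the variable exponent space `ℓ^{p(·)}`. -/
def MemVLp (p : ℕ → ℝ≥0∞) (x : ℕ → ℝ) : Prop := IsBddSeq x ∧ Phi p x < ⊤

open scoped Classical in
/-- The placement map: `(place n y) (n 0) = y 0`, `(place n y) (n k + 1) = y (k+1)`,
and all other coordinates vanish. -/
noncomputable def place (n : ℕ → ℕ) (y : ℕ → ℝ) : ℕ → ℝ := fun j =>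
  if j = n 0 then y 0
  else if h : ∃ k, j = n k + 1 then y (h.choose + 1)
  else 0

/-! By the power-mean inequality, `t ⊞_P s ≤ 2 ^ |1/P - 1/Q| · (t ⊞_Q s)` for all exponents
`P, Q ≥ 1`. Since the zero coordinates between the placed entries leave the recursion unchanged,
the norms `|||place n y|||_(n k)` are exactly the norms `|||y|||_(k)` for the exponents `q ∘ n`.
The reciprocals of the rationals `≥ 1` are dense in `[0, 1]`, so `n` can be chosen strictly
increasing with `|1/p k - 1/q (n k)| < L / 2 ^ (k + 1)`, where `L = log₂ (1 + ε)`; the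
accumulated factors are then at most `2 ^ L = 1 + ε`, in both directions. -/

open Filter Finset
open scoped NNReal

lemma NNReal.rpow_add_rpow_le_two_rpow_mul (a b : ℝ≥0) {r ρ : ℝ} (hr : 0 < r) (hrρ : r ≤ ρ) :
    (a ^ r + b ^ r) ^ r⁻¹ ≤ 2 ^ (r⁻¹ - ρ⁻¹) * (a ^ ρ + b ^ ρ) ^ ρ⁻¹ := by
  have hρ : 0 < ρ := hr.trans_le hrρ
  have hpow : ∀ c : ℝ≥0, (c ^ r) ^ (ρ / r) = c ^ ρ := fun c => by
    rw [← NNReal.rpow_mul, mul_div_cancel₀ _ hr.ne']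
  have h := NNReal.rpow_add_le_mul_rpow_add_rpow (a ^ r) (b ^ r) ((one_le_div hr).2 hrρ)
  rw [hpow, hpow] at h
  calc (a ^ r + b ^ r) ^ r⁻¹ = ((a ^ r + b ^ r) ^ (ρ / r)) ^ ρ⁻¹ := by
        rw [← NNReal.rpow_mul]; congr 1; field_simp
    _ ≤ (2 ^ (ρ / r - 1) * (a ^ ρ + b ^ ρ)) ^ ρ⁻¹ := by gcongr
    _ = 2 ^ (r⁻¹ - ρ⁻¹) * (a ^ ρ + b ^ ρ) ^ ρ⁻¹ := by
        rw [NNReal.mul_rpow, ← NNReal.rpow_mul]; congr 2; field_simp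

lemma NNReal.rpow_add_rpow_le_two_rpow_mul_max (a b : ℝ≥0) {r : ℝ} (hr : 0 < r) :
    (a ^ r + b ^ r) ^ r⁻¹ ≤ 2 ^ r⁻¹ * max a b :=
  calc (a ^ r + b ^ r) ^ r⁻¹ ≤ (2 * max a b ^ r) ^ r⁻¹ := by
        rw [two_mul]; gcongr <;> simp
    _ = 2 ^ r⁻¹ * max a b := by rw [NNReal.mul_rpow, NNReal.rpow_rpow_inv hr.ne']

lemma boxPlus_top (t s : ℝ) : boxPlus ∞ t s = max t s := if_pos rfl

lemma boxPlus_of_ne_top {P : ℝ≥0∞} (hP : P ≠ ∞) (t s : ℝ) :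
    boxPlus P t s = (t ^ P.toReal + s ^ P.toReal) ^ P.toReal⁻¹ := by
  rw [boxPlus, if_neg hP, one_div]

section boxPlus

variable {P Q : ℝ≥0∞} {t s : ℝ}

lemma boxPlus_nonneg (P : ℝ≥0∞) (ht : 0 ≤ t) (hs : 0 ≤ s) : 0 ≤ boxPlus P t s := by
  rcases eq_or_ne P ∞ with rfl | hP
  · exact ht.trans ((boxPlus_top t s).symm ▸ le_max_left t s)
  · rw [boxPlus_of_ne_top hP]; positivity

lemma boxPlus_mono (P : ℝ≥0∞) {t' s' : ℝ} (ht : 0 ≤ t) (hs : 0 ≤ s) (htt' : t ≤ t')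
    (hss' : s ≤ s') : boxPlus P t s ≤ boxPlus P t' s' := by
  rcases eq_or_ne P ∞ with rfl | hP
  · simp only [boxPlus_top]; exact max_le_max htt' hss'
  · simp only [boxPlus_of_ne_top hP]; gcongr

lemma boxPlus_zero_right (hP : P ≠ 0) (ht : 0 ≤ t) : boxPlus P t 0 = t := by
  rcases eq_or_ne P ∞ with rfl | hP'
  · exact (boxPlus_top t 0).trans (max_eq_left ht)
  · have hr := (ENNReal.toReal_pos hP hP').ne'
    rw [boxPlus_of_ne_top hP', Real.zero_rpow hr, add_zero, Real.rpow_rpow_inv ht hr]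

lemma boxPlus_zero_left (hP : P ≠ 0) (hs : 0 ≤ s) : boxPlus P 0 s = s := by
  rcases eq_or_ne P ∞ with rfl | hP'
  · exact (boxPlus_top 0 s).trans (max_eq_right hs)
  · have hr := (ENNReal.toReal_pos hP hP').ne'
    rw [boxPlus_of_ne_top hP', Real.zero_rpow hr, zero_add, Real.rpow_rpow_inv hs hr]

lemma le_boxPlus_left (hP : P ≠ 0) (ht : 0 ≤ t) (hs : 0 ≤ s) : t ≤ boxPlus P t s :=
  (boxPlus_zero_right hP ht).symm.trans_le (boxPlus_mono P ht le_rfl le_rfl hs)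

lemma le_boxPlus_right (hP : P ≠ 0) (ht : 0 ≤ t) (hs : 0 ≤ s) : s ≤ boxPlus P t s :=
  (boxPlus_zero_left hP hs).symm.trans_le (boxPlus_mono P le_rfl hs ht le_rfl)

lemma boxPlus_mul (hP : P ≠ 0) {c : ℝ} (hc : 0 ≤ c) (ht : 0 ≤ t) (hs : 0 ≤ s) :
    boxPlus P (c * t) (c * s) = c * boxPlus P t s := by
  rcases eq_or_ne P ∞ with rfl | hP'
  · simp only [boxPlus_top, mul_max_of_nonneg _ _ hc]
  · have hr := (ENNReal.toReal_pos hP hP').ne'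
    rw [boxPlus_of_ne_top hP', boxPlus_of_ne_top hP', Real.mul_rpow hc ht, Real.mul_rpow hc hs,
      ← mul_add, Real.mul_rpow (by positivity) (by positivity), Real.rpow_rpow_inv hc hr]

lemma boxPlus_le_boxPlus_of_exponent_le (hP : P ≠ 0) (hPQ : P ≤ Q) (ht : 0 ≤ t) (hs : 0 ≤ s) :
    boxPlus Q t s ≤ boxPlus P t s := by
  rcases eq_or_ne Q ∞ with rfl | hQ
  · rw [boxPlus_top]; exact max_le (le_boxPlus_left hP ht hs) (le_boxPlus_right hP ht hs)
  have hP' : P ≠ ∞ := ne_top_of_le_ne_top hQ hPQ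
  lift t to ℝ≥0 using ht
  lift s to ℝ≥0 using hs
  rw [boxPlus_of_ne_top hQ, boxPlus_of_ne_top hP', ← one_div, ← one_div]
  exact_mod_cast NNReal.rpow_add_rpow_le t s (ENNReal.toReal_pos hP hP')
    (ENNReal.toReal_mono hQ hPQ)

lemma boxPlus_le_two_rpow_mul (hP : P ≠ 0) (hPQ : P ≤ Q) (ht : 0 ≤ t) (hs : 0 ≤ s) :
    boxPlus P t s ≤ 2 ^ (P⁻¹.toReal - Q⁻¹.toReal) * boxPlus Q t s := by
  rcases eq_or_ne P ∞ with rfl | hP'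
  · simp [top_le_iff.1 hPQ]
  have hr := ENNReal.toReal_pos hP hP'
  lift t to ℝ≥0 using ht
  lift s to ℝ≥0 using hs
  rcases eq_or_ne Q ∞ with rfl | hQ
  · rw [boxPlus_of_ne_top hP', boxPlus_top, ENNReal.inv_top, ENNReal.toReal_zero, sub_zero,
      ENNReal.toReal_inv]
    exact_mod_cast NNReal.rpow_add_rpow_le_two_rpow_mul_max t s hr
  · rw [boxPlus_of_ne_top hP', boxPlus_of_ne_top hQ, ENNReal.toReal_inv, ENNReal.toReal_inv]
    exact_mod_cast NNReal.rpow_add_rpow_le_two_rpow_mul t s hr (ENNReal.toReal_mono hQ hPQ)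

end boxPlus

noncomputable def exponentDist (P Q : ℝ≥0∞) : ℝ := |P⁻¹.toReal - Q⁻¹.toReal|

lemma exponentDist_comm (P Q : ℝ≥0∞) : exponentDist P Q = exponentDist Q P :=
  abs_sub_comm _ _

lemma exponentDist_nonneg (P Q : ℝ≥0∞) : 0 ≤ exponentDist P Q := abs_nonneg _

lemma boxPlus_le_two_rpow_exponentDist_mul {P Q : ℝ≥0∞} (hP : P ≠ 0) (hQ : Q ≠ 0) {t s : ℝ}
    (ht : 0 ≤ t) (hs : 0 ≤ s) : boxPlus P t s ≤ 2 ^ exponentDist P Q * boxPlus Q t s := by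
  rcases le_total P Q with hPQ | hQP
  · refine (boxPlus_le_two_rpow_mul hP hPQ ht hs).trans ?_
    gcongr
    · exact boxPlus_nonneg Q ht hs
    · exact one_le_two
    · exact le_abs_self _
  · calc boxPlus P t s ≤ boxPlus Q t s := boxPlus_le_boxPlus_of_exponent_le hQ hQP ht hs
      _ ≤ 2 ^ exponentDist P Q * boxPlus Q t s :=
        le_mul_of_one_le_left (boxPlus_nonneg Q ht hs)
          (Real.one_le_rpow one_le_two (exponentDist_nonneg P Q))

section seqNorm

variable {p p' : ℕ → ℝ≥0∞} {x : ℕ → ℝ}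

lemma seqNorm_zero (p : ℕ → ℝ≥0∞) (x : ℕ → ℝ) :
    seqNorm p x 0 = boxPlus (p 0) |x 0| |x 1| := rfl

lemma seqNorm_succ (p : ℕ → ℝ≥0∞) (x : ℕ → ℝ) (k : ℕ) :
    seqNorm p x (k + 1) = boxPlus (p (k + 1)) (seqNorm p x k) |x (k + 2)| := rfl

lemma seqNorm_nonneg (p : ℕ → ℝ≥0∞) (x : ℕ → ℝ) (k : ℕ) : 0 ≤ seqNorm p x k := by
  induction k with
  | zero => exact boxPlus_nonneg _ (abs_nonneg _) (abs_nonneg _)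
  | succ k ih => exact boxPlus_nonneg _ ih (abs_nonneg _)

lemma seqNorm_monotone (hp : ∀ m, p m ≠ 0) (x : ℕ → ℝ) : Monotone (seqNorm p x) :=
  monotone_nat_of_le_succ fun k =>
    le_boxPlus_left (hp (k + 1)) (seqNorm_nonneg p x k) (abs_nonneg _)

lemma seqNorm_le_two_rpow_sum_mul (hp : ∀ m, p m ≠ 0) (hp' : ∀ m, p' m ≠ 0) (x : ℕ → ℝ)
    (k : ℕ) : seqNorm p x k ≤
      2 ^ (∑ i ∈ range (k + 1), exponentDist (p i) (p' i)) * seqNorm p' x k := by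
  induction k with
  | zero =>
    simpa [seqNorm_zero] using
      boxPlus_le_two_rpow_exponentDist_mul (hp 0) (hp' 0) (abs_nonneg (x 0)) (abs_nonneg (x 1))
  | succ k ih =>
    set C := (2 : ℝ) ^ (∑ i ∈ range (k + 1), exponentDist (p i) (p' i))
    have hC : 1 ≤ C :=
      Real.one_le_rpow one_le_two (sum_nonneg fun i _ => exponentDist_nonneg _ _)
    have hy := abs_nonneg (x (k + 2))
    have hS' := seqNorm_nonneg p' x k
    calc seqNorm p x (k + 1)
        ≤ boxPlus (p (k + 1)) (C * seqNorm p' x k) (C * |x (k + 2)|) :=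
          boxPlus_mono _ (seqNorm_nonneg p x k) hy ih (le_mul_of_one_le_left hy hC)
      _ = C * boxPlus (p (k + 1)) (seqNorm p' x k) |x (k + 2)| :=
          boxPlus_mul (hp _) (zero_le_one.trans hC) hS' hy
      _ ≤ C * (2 ^ exponentDist (p (k + 1)) (p' (k + 1)) * seqNorm p' x (k + 1)) :=
          mul_le_mul_of_nonneg_left
            (boxPlus_le_two_rpow_exponentDist_mul (hp _) (hp' _) hS' hy)
            (zero_le_one.trans hC)
      _ = _ := by
          rw [sum_range_succ, Real.rpow_add two_pos, mul_assoc]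

lemma Phi_le_ofReal_two_rpow_mul (hp : ∀ m, p m ≠ 0) (hp' : ∀ m, p' m ≠ 0) {L : ℝ}
    (hL : ∀ k, ∑ i ∈ range (k + 1), exponentDist (p i) (p' i) ≤ L) (x : ℕ → ℝ) :
    Phi p x ≤ ENNReal.ofReal (2 ^ L) * Phi p' x := by
  refine iSup_le fun k => ?_
  calc ENNReal.ofReal (seqNorm p x k)
      ≤ ENNReal.ofReal (2 ^ L * seqNorm p' x k) := by
        refine ENNReal.ofReal_le_ofReal ((seqNorm_le_two_rpow_sum_mul hp hp' x k).trans ?_)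
        gcongr
        exacts [seqNorm_nonneg p' x k, one_le_two, hL k]
    _ = ENNReal.ofReal (2 ^ L) * ENNReal.ofReal (seqNorm p' x k) :=
        ENNReal.ofReal_mul (by positivity)
    _ ≤ ENNReal.ofReal (2 ^ L) * Phi p' x := by
        gcongr; exact le_iSup (fun k => ENNReal.ofReal (seqNorm p' x k)) k

end seqNorm

section

variable {q : ℕ → ℝ≥0∞} {x : ℕ → ℝ}

lemma seqNorm_eq_abs_of_eq_zero (hq : ∀ m, q m ≠ 0) {m : ℕ} (hx : ∀ i ≤ m, x i = 0) :
    seqNorm q x m = |x (m + 1)| := by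
  induction m with
  | zero => rw [seqNorm_zero, hx 0 le_rfl, abs_zero, boxPlus_zero_left (hq 0) (abs_nonneg _)]
  | succ m ih =>
    rw [seqNorm_succ, ih fun i hi => hx i (by omega), hx (m + 1) le_rfl, abs_zero,
      boxPlus_zero_left (hq _) (abs_nonneg _)]

lemma seqNorm_eq_of_eq_zero (hq : ∀ m, q m ≠ 0) {a b : ℕ} (hab : a ≤ b)
    (hx : ∀ j, a + 1 < j → j ≤ b + 1 → x j = 0) : seqNorm q x b = seqNorm q x a := by
  induction b, hab using Nat.le_induction with
  | base => rfl
  | succ b hab ih =>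
    rw [seqNorm_succ, hx (b + 2) (by omega) le_rfl, abs_zero,
      boxPlus_zero_right (hq _) (seqNorm_nonneg q x b), ih fun j h1 h2 => hx j h1 (by omega)]

end

section place

variable {n : ℕ → ℕ} (y : ℕ → ℝ)

lemma place_apply_first : place n y (n 0) = y 0 := by
  simp [place]

lemma place_apply_succ (hn : StrictMono n) (k : ℕ) : place n y (n k + 1) = y (k + 1) := by
  have hex : ∃ i, n k + 1 = n i + 1 := ⟨k, rfl⟩
  have hchoose : hex.choose = k := hn.injective (by simpa using hex.choose_spec.symm)
  have h0 : n k + 1 ≠ n 0 := by have := hn.monotone (Nat.zero_le k); omega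
  simp only [place, if_neg h0, dif_pos hex, hchoose]

lemma place_eq_zero {j : ℕ} (h0 : j ≠ n 0) (hsucc : ∀ k, j ≠ n k + 1) : place n y j = 0 := by
  simp [place, h0, hsucc]

lemma place_eq_zero_of_lt (hn : StrictMono n) {j : ℕ} (hj : j < n 0) : place n y j = 0 :=
  place_eq_zero y hj.ne fun k => by have := hn.monotone (Nat.zero_le k); omega

lemma place_eq_zero_of_lt_of_le (hn : StrictMono n) {k j : ℕ} (h1 : n k + 1 < j)
    (h2 : j ≤ n (k + 1)) : place n y j = 0 := by
  refine place_eq_zero y (by have := hn.monotone (Nat.zero_le k); omega) fun i hi => ?_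
  have hki : k < i := hn.lt_iff_lt.1 (by omega)
  have hik : i < k + 1 := hn.lt_iff_lt.1 (by omega)
  omega

variable {q : ℕ → ℝ≥0∞} (hq : ∀ m, q m ≠ 0) (hn : StrictMono n)
include hq hn

lemma seqNorm_place_first :
    seqNorm q (place n y) (n 0) = boxPlus (q (n 0)) |y 0| |y 1| := by
  have h0 : place n y (n 0) = y 0 := place_apply_first y
  have h1 : place n y (n 0 + 1) = y 1 := place_apply_succ y hn 0
  rcases Nat.eq_zero_or_pos (n 0) with h | h
  · rw [h] at h0 h1 ⊢
    rw [seqNorm_zero, h0, h1]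
  · obtain ⟨m, hm⟩ : ∃ m, n 0 = m + 1 := ⟨n 0 - 1, by omega⟩
    rw [hm] at h0 h1 ⊢
    rw [seqNorm_succ, seqNorm_eq_abs_of_eq_zero hq fun i hi =>
      place_eq_zero_of_lt y hn (by omega), h0, h1]

lemma seqNorm_place_succ (k : ℕ) :
    seqNorm q (place n y) (n (k + 1)) =
      boxPlus (q (n (k + 1))) (seqNorm q (place n y) (n k)) |y (k + 2)| := by
  have hlt : n k < n (k + 1) := hn (Nat.lt_succ_self k)
  obtain ⟨m, hm⟩ : ∃ m, n (k + 1) = m + 1 := ⟨n (k + 1) - 1, by omega⟩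
  have hconst : seqNorm q (place n y) m = seqNorm q (place n y) (n k) :=
    seqNorm_eq_of_eq_zero hq (by omega) fun j h1 h2 =>
      place_eq_zero_of_lt_of_le y hn h1 (by omega)
  rw [hm, seqNorm_succ, hconst, ← place_apply_succ y hn (k + 1), hm]

lemma seqNorm_place (k : ℕ) : seqNorm q (place n y) (n k) = seqNorm (q ∘ n) y k := by
  induction k with
  | zero => exact seqNorm_place_first y hq hn
  | succ k ih => rw [seqNorm_place_succ y hq hn, ih]; rfl

lemma Phi_place : Phi q (place n y) = Phi (q ∘ n) y := by
  refine le_antisymm (iSup_le fun j => ?_) (iSup_le fun k => ?_)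
  · calc ENNReal.ofReal (seqNorm q (place n y) j)
        ≤ ENNReal.ofReal (seqNorm q (place n y) (n j)) :=
          ENNReal.ofReal_le_ofReal (seqNorm_monotone hq _ hn.le_apply)
      _ ≤ Phi (q ∘ n) y := by
          rw [seqNorm_place y hq hn]
          exact le_iSup (fun k => ENNReal.ofReal (seqNorm (q ∘ n) y k)) j
  · rw [← seqNorm_place y hq hn]
    exact le_iSup (fun j => ENNReal.ofReal (seqNorm q (place n y) j)) (n k)

end place

lemma ENNReal.toReal_inv_ofReal_inv {x : ℝ} (hx : 0 < x) : (ENNReal.ofReal x⁻¹)⁻¹.toReal = x := by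
  rw [ENNReal.ofReal_inv_of_pos hx, inv_inv, ENNReal.toReal_ofReal hx.le]

lemma frequently_exponentDist_lt (q : ℕ → ℝ≥0∞)
    (hsurj : ∀ r : ℚ, 1 ≤ r → ∃ n, q n = ENNReal.ofReal (r : ℝ))
    {P : ℝ≥0∞} (hP : 1 ≤ P) {δ : ℝ} (hδ : 0 < δ) :
    ∃ᶠ m in atTop, exponentDist P (q m) < δ := by
  set a := P⁻¹.toReal
  have ha : a ≤ 1 := ENNReal.toReal_le_of_le_ofReal zero_le_one (by simpa using hP)
  have ha0 : 0 ≤ a := ENNReal.toReal_nonneg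
  obtain ⟨u, hu, huv⟩ := exists_rat_btwn (show max 0 (a - δ) < min 1 (a + δ) from
    max_lt (lt_min one_pos (by linarith)) (lt_min (by linarith) (by linarith)))
  obtain ⟨v, huv, hv⟩ := exists_rat_btwn huv
  have hS : ∀ s ∈ Set.Ioo u v, 0 < (s : ℝ) ∧ (s : ℝ) < 1 ∧ |a - s| < δ := by
    rintro s ⟨hus, hsv⟩
    have hus : (u : ℝ) < s := by exact_mod_cast hus
    have hsv : (s : ℝ) < v := by exact_mod_cast hsv
    simp only [max_lt_iff, lt_min_iff] at hu hv
    exact ⟨by linarith, by linarith, abs_sub_lt_iff.2 ⟨by linarith, by linarith⟩⟩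
  let f : ℚ → ℝ≥0∞ := fun s => ENNReal.ofReal ((s : ℝ)⁻¹)
  have hf : Set.InjOn f (Set.Ioo u v) := fun s hs s' hs' h => by
    have := congrArg (fun Q : ℝ≥0∞ => Q⁻¹.toReal) h
    simp only [f, ENNReal.toReal_inv_ofReal_inv (hS s hs).1,
      ENNReal.toReal_inv_ofReal_inv (hS s' hs').1] at this
    exact_mod_cast this
  have hrange : f '' Set.Ioo u v ⊆ Set.range q := by
    rintro _ ⟨s, hs, rfl⟩
    obtain ⟨m, hm⟩ := hsurj s⁻¹ (one_le_inv₀ (by exact_mod_cast (hS s hs).1) |>.2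
      (by exact_mod_cast (hS s hs).2.1.le))
    exact ⟨m, by rw [hm]; simp [f]⟩
  refine Nat.frequently_atTop_iff_infinite.2
    ((((Set.infinite_image_iff hf).2 (Set.Ioo_infinite (by exact_mod_cast huv))).preimage
      hrange).mono ?_)
  rintro m ⟨s, hs, hm⟩
  change |a - (q m)⁻¹.toReal| < δ
  rw [← hm, ENNReal.toReal_inv_ofReal_inv (hS s hs).1]
  exact (hS s hs).2.2

lemma sum_range_mul_half_pow_succ_le {L : ℝ} (hL : 0 ≤ L) (k : ℕ) :
    ∑ i ∈ range k, L * (1 / 2) ^ (i + 1) ≤ L := by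
  simp only [pow_succ, ← mul_sum, ← sum_mul]
  nlinarith [sum_geometric_two_le k]

theorem universal_rational_exponent_general (q : ℕ → ℝ≥0∞)
    (hqrat : ∀ n, ∃ r : ℚ, 1 ≤ r ∧ q n = ENNReal.ofReal (r : ℝ))
    (hsurj : ∀ r : ℚ, 1 ≤ r → ∃ n, q n = ENNReal.ofReal (r : ℝ))
    (p : ℕ → ℝ≥0∞) (hp : ∀ m, 1 ≤ p m) (ε : ℝ) (hε : 0 < ε) :
    ∃ n : ℕ → ℕ, StrictMono n ∧ ∀ y : ℕ → ℝ, IsBddSeq y →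
      (ENNReal.ofReal (1 + ε))⁻¹ * Phi p y ≤ Phi q (place n y) ∧
      Phi q (place n y) ≤ ENNReal.ofReal (1 + ε) * Phi p y := by
  have hq : ∀ m, q m ≠ 0 := fun m => by
    obtain ⟨r, hr, hm⟩ := hqrat m
    exact hm ▸ (ENNReal.ofReal_pos.2 (by exact_mod_cast zero_lt_one.trans_le hr)).ne'
  have hp0 : ∀ m, p m ≠ 0 := fun m => (zero_lt_one.trans_le (hp m)).ne'
  set L := Real.logb 2 (1 + ε)
  have hL : 0 < L := Real.logb_pos one_lt_two (by linarith)
  obtain ⟨n, hn, hdist⟩ := extraction_forall_of_frequently fun k =>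
    frequently_exponentDist_lt q hsurj (hp k) (by positivity : 0 < L * (1 / 2) ^ (k + 1))
  have hsum : ∀ k, ∑ i ∈ range (k + 1), exponentDist (p i) (q (n i)) ≤ L := fun k =>
    (sum_le_sum fun i _ => (hdist i).le).trans (sum_range_mul_half_pow_succ_le hL.le _)
  have h2L : ENNReal.ofReal (2 ^ L) = ENNReal.ofReal (1 + ε) := by
    rw [Real.rpow_logb two_pos (by norm_num) (by linarith)]
  refine ⟨n, hn, fun y _ => ?_⟩
  rw [Phi_place y hq hn, ← h2L]
  constructor
  · rw [ENNReal.inv_mul_le_iff (by positivity) ENNReal.ofReal_ne_top]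
    exact Phi_le_ofReal_two_rpow_mul hp0 (fun m => hq (n m)) hsum y
  · exact Phi_le_ofReal_two_rpow_mul (fun m => hq (n m)) hp0
      (fun k => by simpa only [exponentDist_comm] using hsum k) y

/-- Universality of the rational-exponent space: if `q` bijectively enumerates
`ℚ ∩ [1,∞)`, then `ℓ^{q(·)}` contains every `ℓ^{p(·)}` almost isometrically,
via placement maps. -/
theorem universal_rational_exponent (q : ℕ → ℝ≥0∞)
    (hqrat : ∀ n, ∃ r : ℚ, 1 ≤ r ∧ q n = ENNReal.ofReal (r : ℝ))
    (hinj : Function.Injective q)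
    (hsurj : ∀ r : ℚ, 1 ≤ r → ∃ n, q n = ENNReal.ofReal (r : ℝ))
    (p : ℕ → ℝ≥0∞) (hp : ∀ m, 1 ≤ p m) (ε : ℝ) (hε : 0 < ε) :
    ∃ n : ℕ → ℕ, StrictMono n ∧ ∀ y : ℕ → ℝ, IsBddSeq y →
      (ENNReal.ofReal (1 + ε))⁻¹ * Phi p y ≤ Phi q (place n y) ∧
      Phi q (place n y) ≤ ENNReal.ofReal (1 + ε) * Phi p y :=
  universal_rational_exponent_general q hqrat hsurj p hp ε hε
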